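/- arXiv:1107.0487 — 2 statements merged into one kernel-verified Lean document; each statement's English description precedes it below -/
import Mathlib

section
/- Let M be a smooth m-dimensional manifold, p ∈ M, F_p the algebra of germs of smooth functions at p, and I_p the ideal of germs vanishing at p. If (U, φ) is a chart around p with coordinate functions x^i = t^i ∘ φ satisfying x^i(p) = 0, then the classes of x^1, …, x^m form a basis of the real vector space I_p / I_p², which is therefore m-dimensional. -/
/-!
Spanning is Hadamard's lemma: a smooth `F` on `ℝᵐ` with `F 0 = 0` is `F t = ∑ tⁱ Gᵢ(t)` with
`Gᵢ(t) = ∫₀¹ ∂ᵢF(s t) ds` smooth. Applied to the chart representative of `f ∈ I_p`, first cut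
off by a bump function so that it is smooth on all of `ℝᵐ`, and pulled back along the global map
`(x¹, …, xᵐ) : M → ℝᵐ`, it gives `f = ∑ xⁱ gᵢ` near `p`, hence `[f] ≡ ∑ gᵢ(p) [xⁱ]` modulo `I_p²`.
Independence: the differential at `p`, read in the chart, is local and satisfies the Leibniz rule,
so it kills `I_p²` and descends to `I_p / I_p²`, where it sends `[xⁱ]` to the `i`-th coordinate
functional.
-/

open scoped Manifold

set_option synthInstance.maxHeartbeats 400000
set_option maxHeartbeats 1000000

noncomputable section

variable (m : ℕ) {M : Type*} [TopologicalSpace M]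
  [ChartedSpace (EuclideanSpace ℝ (Fin m)) M]
  [IsManifold (𝓡 m) (⊤ : ℕ∞) M]

/-- The algebra of smooth real functions on `M`. -/
abbrev SF (M : Type*) [TopologicalSpace M]
    [ChartedSpace (EuclideanSpace ℝ (Fin m)) M] :=
  ContMDiffMap (𝓡 m) 𝓘(ℝ, ℝ) M ℝ (⊤ : ℕ∞)

/-- The ideal of smooth functions vanishing on a neighbourhood of `p`. -/
def nhdIdeal (p : M) : Ideal (SF m M) where
  carrier := {f | ∀ᶠ x in nhds p, f x = 0}
  add_mem' := by
    intro f g hf hg; filter_upwards [hf, hg] with x hx hy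
    simp [hx, hy]
  zero_mem' := by filter_upwards with x; simp
  smul_mem' := by
    intro c f hf; filter_upwards [hf] with x hx
    simp [smul_eq_mul, hx]

/-- The algebra of germs of smooth functions at `p`. -/
abbrev Germs (p : M) := SF m M ⧸ nhdIdeal m p

def evalHom (p : M) : SF m M →+* ℝ where
  toFun f := f p
  map_one' := rfl
  map_mul' _ _ := rfl
  map_zero' := rfl
  map_add' _ _ := rfl

/-- Evaluation of germs at `p`. -/
def germEval (p : M) : Germs m p →+* ℝ :=
  Ideal.Quotient.lift (nhdIdeal m p) (evalHom m p)
    (fun f hf => (hf : ∀ᶠ x in nhds p, f x = 0).self_of_nhds)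

/-- The maximal ideal `I_p` of germs vanishing at `p`. -/
def mIdeal (p : M) : Ideal (Germs m p) := RingHom.ker (germEval m p)

/-- The quotient `I_p / I_p^{r+1}` as a real vector space. -/
abbrev IQ (p : M) (r : ℕ) :=
  ↥((mIdeal m p).restrictScalars ℝ) ⧸
    (Submodule.comap ((mIdeal m p).restrictScalars ℝ).subtype
      ((mIdeal m p ^ (r + 1)).restrictScalars ℝ))

lemma mk_mem_mIdeal (p : M) (f : SF m M) (hf : f p = 0) :
    Ideal.Quotient.mk (nhdIdeal m p) f ∈ (mIdeal m p).restrictScalars ℝ := by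
  simp [Submodule.restrictScalars_mem, mIdeal, RingHom.mem_ker, germEval,
    Ideal.Quotient.lift_mk, evalHom, hf]
  exact hf

open Metric Filter Topology Function
open scoped ContDiff

universe u

section ParametricIntegral

variable {H : Type u} [NormedAddCommGroup H] [NormedSpace ℝ H] [FiniteDimensional ℝ H]

theorem hasFDerivAt_parametric_intervalIntegral_of_contDiff {V : Type*} [NormedAddCommGroup V]
    [NormedSpace ℝ V] [CompleteSpace V] {K : H → ℝ → V} (hK : ContDiff ℝ 1 (uncurry K))
    (a b : ℝ) (x₀ : H) :
    HasFDerivAt (fun x => ∫ s in a..b, K x s)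
      (∫ s in a..b, (fderiv ℝ (uncurry K) (x₀, s)).comp (.inl ℝ H ℝ)) x₀ := by
  have hK' : Continuous fun q : H × ℝ => (fderiv ℝ (uncurry K) q).comp (.inl ℝ H ℝ) :=
    (hK.continuous_fderiv one_ne_zero).clm_comp continuous_const
  obtain ⟨C, hC⟩ : ∃ C, ∀ q ∈ closedBall x₀ 1 ×ˢ Set.uIcc a b,
      ‖(fderiv ℝ (uncurry K) q).comp (.inl ℝ H ℝ)‖ ≤ C :=
    ((isCompact_closedBall x₀ 1).prod isCompact_uIcc).exists_bound_of_continuousOn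
      hK'.continuousOn
  have hKx : ∀ x, Continuous (K x) := fun x => hK.continuous.comp (Continuous.prodMk_right x)
  refine intervalIntegral.hasFDerivAt_integral_of_dominated_of_fderiv_le (bound := fun _ => C)
    (ball_mem_nhds x₀ one_pos) (.of_forall fun x => (hKx x).aestronglyMeasurable)
    ((hKx x₀).intervalIntegrable a b)
    (hK'.comp (Continuous.prodMk_right x₀)).aestronglyMeasurable
    (.of_forall fun s hs x hx => hC (x, s) ⟨ball_subset_closedBall hx, Set.uIoc_subset_uIcc hs⟩)
    intervalIntegrable_const (.of_forall fun s _ x _ => ?_)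
  exact (hK.differentiable one_ne_zero (x, s)).hasFDerivAt.comp (f := fun e => (e, s)) x
    (hasFDerivAt_prodMk_left x s)

theorem contDiff_parametric_intervalIntegral_of_contDiff {V : Type u} [NormedAddCommGroup V]
    [NormedSpace ℝ V] [CompleteSpace V] {K : H → ℝ → V} (hK : ContDiff ℝ ∞ (uncurry K))
    (a b : ℝ) : ContDiff ℝ ∞ fun x => ∫ s in a..b, K x s := by
  suffices ∀ n : ℕ, ∀ (V : Type u) [NormedAddCommGroup V] [NormedSpace ℝ V] [CompleteSpace V]
      (K : H → ℝ → V), ContDiff ℝ ∞ (uncurry K) → ContDiff ℝ n fun x => ∫ s in a..b, K x s from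
    contDiff_infty.2 fun n => this n V K hK
  intro n
  induction n with
  | zero =>
    intro V _ _ _ K hK
    simpa using intervalIntegral.continuous_parametric_intervalIntegral_of_continuous'
      hK.continuous a b
  | succ n ih =>
    intro V _ _ _ K hK
    have hderiv := hasFDerivAt_parametric_intervalIntegral_of_contDiff (hK.of_le (by simp)) a b
    rw [Nat.cast_succ, contDiff_succ_iff_fderiv]
    refine ⟨fun x => (hderiv x).differentiableAt, by simp, ?_⟩
    rw [funext fun x => (hderiv x).fderiv]
    exact ih _ _ (((hK.fderiv_right (by simp)).clm_comp contDiff_const).comp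
      (contDiff_fst.prodMk contDiff_snd))

end ParametricIntegral

theorem ContDiff.exists_eq_clm_apply_self {E : Type u} [NormedAddCommGroup E] [NormedSpace ℝ E]
    [FiniteDimensional ℝ E] {F : E → ℝ} (hF : ContDiff ℝ ∞ F) (hF0 : F 0 = 0) :
    ∃ G : E → E →L[ℝ] ℝ, ContDiff ℝ ∞ G ∧ ∀ t, F t = G t t := by
  refine ⟨fun t => ∫ s in (0 : ℝ)..1, fderiv ℝ F (s • t),
    contDiff_parametric_intervalIntegral_of_contDiff
      ((hF.fderiv_right (by simp)).comp (contDiff_snd.smul contDiff_fst)) 0 1, fun t => ?_⟩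
  have hcont : Continuous fun s : ℝ => fderiv ℝ F (s • t) :=
    (hF.continuous_fderiv (by simp)).comp (continuous_id.smul continuous_const)
  have hline : ∀ s ∈ Set.uIcc (0 : ℝ) 1,
      HasDerivAt (fun s : ℝ => F (s • t)) (fderiv ℝ F (s • t) t) s := fun s _ =>
    (hF.differentiable (by simp) _).hasFDerivAt.comp_hasDerivAt s
      (by simpa using (hasDerivAt_id s).smul_const t)
  rw [ContinuousLinearMap.intervalIntegral_apply (hcont.intervalIntegrable 0 1),
    intervalIntegral.integral_eq_sub_of_hasDerivAt hline
      ((hcont.clm_apply continuous_const).intervalIntegrable 0 1)]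
  simp [hF0]

theorem ContDiffOn.exists_contDiff_eventuallyEq {E F : Type*} [NormedAddCommGroup E]
    [NormedSpace ℝ E] [HasContDiffBump E] [NormedAddCommGroup F] [NormedSpace ℝ F]
    {n : ℕ∞} {f : E → F} {U : Set E} (hf : ContDiffOn ℝ n f U) (hU : IsOpen U) {c : E}
    (hc : c ∈ U) :
    ∃ g : E → F, ContDiff ℝ n g ∧ g =ᶠ[𝓝 c] f := by
  obtain ⟨ε, hε, hεU⟩ := Metric.isOpen_iff.1 hU c hc
  let χ : ContDiffBump c := ⟨ε / 3, ε / 2, by positivity, by linarith⟩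
  refine ⟨fun t => χ t • f t, contDiff_iff_contDiffAt.2 fun t => ?_, ?_⟩
  · by_cases ht : t ∈ U
    · exact χ.contDiff.contDiffAt.smul (hf.contDiffAt (hU.mem_nhds ht))
    · have hχ : t ∉ tsupport χ := by
        rw [χ.tsupport_eq]
        exact fun h => ht (hεU (closedBall_subset_ball (by simp [χ]; linarith) h))
      refine contDiffAt_const (c := (0 : F)).congr_of_eventuallyEq ?_
      filter_upwards [notMem_tsupport_iff_eventuallyEq.1 hχ] with y hy
      simp [hy]
  · filter_upwards [χ.eventuallyEq_one] with y hy
    simp [hy]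

theorem EuclideanSpace.linearIndependent_proj {𝕜 : Type*} [RCLike 𝕜] (ι : Type*) [Fintype ι] :
    LinearIndependent 𝕜 fun i : ι => (EuclideanSpace.proj i : EuclideanSpace 𝕜 ι →L[𝕜] 𝕜) := by
  classical
  refine Fintype.linearIndependent_iff.2 fun c hc j => ?_
  simpa using congr($hc (EuclideanSpace.single j 1))

local notation "E" => EuclideanSpace ℝ (Fin m)

section

omit [IsManifold (𝓡 m) (⊤ : ℕ∞) M]

theorem mk_eq_mk_iff_eventuallyEq (p : M) {f g : SF m M} :
    Ideal.Quotient.mk (nhdIdeal m p) f = Ideal.Quotient.mk (nhdIdeal m p) g ↔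
      ∀ᶠ q in 𝓝 p, f q = g q := by
  rw [Ideal.Quotient.eq]
  exact eventually_congr (.of_forall fun q => sub_eq_zero)

theorem mk_mem_mIdeal_iff (p : M) {f : SF m M} :
    Ideal.Quotient.mk (nhdIdeal m p) f ∈ mIdeal m p ↔ f p = 0 :=
  Iff.rfl

theorem mk_mul_sub_smul_mem_mIdeal_sq (p : M) {x : SF m M} (hx : x p = 0) (g : SF m M) :
    Ideal.Quotient.mk (nhdIdeal m p) x * Ideal.Quotient.mk (nhdIdeal m p) g -
      g p • Ideal.Quotient.mk (nhdIdeal m p) x ∈ mIdeal m p ^ 2 := by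
  have hg : Ideal.Quotient.mk (nhdIdeal m p) (g - algebraMap ℝ (SF m M) (g p)) ∈ mIdeal m p := by
    rw [mk_mem_mIdeal_iff]
    exact sub_eq_zero.2 rfl
  rw [pow_two]
  convert Ideal.mul_mem_mul ((mk_mem_mIdeal_iff m p).2 hx) hg using 1
  rw [map_sub, mul_sub, Ideal.Quotient.mk_algebraMap, mul_comm _ (algebraMap _ _ _),
    ← Algebra.smul_def]

end

def cotangentClass (p : M) (f : SF m M) (hf : f p = 0) : IQ m p 1 :=
  Submodule.Quotient.mk ⟨Ideal.Quotient.mk (nhdIdeal m p) f, mk_mem_mIdeal m p f hf⟩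

theorem cotangentClass_eq_sum_smul (p : M) {ι : Type*} [Fintype ι] {f : SF m M} (hf : f p = 0)
    {y : ι → SF m M} (hy : ∀ i, y i p = 0) (c : ι → ℝ)
    (h : Ideal.Quotient.mk (nhdIdeal m p) f -
      ∑ i, c i • Ideal.Quotient.mk (nhdIdeal m p) (y i) ∈ mIdeal m p ^ 2) :
    cotangentClass m p f hf = ∑ i, c i • cotangentClass m p (y i) (hy i) := by
  simp only [cotangentClass, ← Submodule.mkQ_apply, ← map_smul, ← map_sum]
  rw [Submodule.mkQ_apply, Submodule.mkQ_apply, Submodule.Quotient.eq, Submodule.mem_comap]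
  simpa using h

theorem contDiffOn_comp_chartAt_symm (p : M) (f : SF m M) :
    ContDiffOn ℝ ∞ (f ∘ (chartAt E p).symm) (chartAt E p).target :=
  (f.contMDiff.comp_contMDiffOn contMDiffOn_chart_symm).contDiffOn

theorem differentiableAt_comp_chartAt_symm (p : M) (f : SF m M) :
    DifferentiableAt ℝ (f ∘ (chartAt E p).symm) (chartAt E p p) :=
  ((contDiffOn_comp_chartAt_symm m p f).differentiableOn (by simp)).differentiableAt
    ((chartAt E p).open_target.mem_nhds (mem_chart_target E p))

def chartDeriv (p : M) : SF m M →ₗ[ℝ] (E →L[ℝ] ℝ) where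
  toFun f := fderiv ℝ (f ∘ (chartAt E p).symm) (chartAt E p p)
  map_add' f g := fderiv_fun_add (differentiableAt_comp_chartAt_symm m p f)
    (differentiableAt_comp_chartAt_symm m p g)
  map_smul' c f := fderiv_fun_const_smul (differentiableAt_comp_chartAt_symm m p f) c

theorem chartDeriv_mul (p : M) (f g : SF m M) :
    chartDeriv m p (f * g) = f p • chartDeriv m p g + g p • chartDeriv m p f := by
  have h := fderiv_fun_mul (differentiableAt_comp_chartAt_symm m p f)
    (differentiableAt_comp_chartAt_symm m p g)
  simp only [Function.comp_apply, (chartAt E p).left_inv (mem_chart_source E p)] at h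
  exact h

theorem chartDeriv_eq_of_eventuallyEq (p : M) {f g : SF m M} (h : ∀ᶠ q in 𝓝 p, f q = g q) :
    chartDeriv m p f = chartDeriv m p g :=
  EventuallyEq.fderiv_eq (((chartAt E p).tendsto_symm (mem_chart_source E p)).eventually h)

theorem chartDeriv_of_eventuallyEq_coord (p : M) {x : SF m M} {i : Fin m}
    (hx : ∀ᶠ q in 𝓝 p, x q = chartAt E p q i) :
    chartDeriv m p x = EuclideanSpace.proj i := by
  have hcoord : x ∘ (chartAt E p).symm =ᶠ[𝓝 (chartAt E p p)] EuclideanSpace.proj (𝕜 := ℝ) i := by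
    filter_upwards [((chartAt E p).tendsto_symm (mem_chart_source E p)).eventually hx,
      (chartAt E p).open_target.mem_nhds (mem_chart_target E p)] with t ht ht'
    simp [ht, (chartAt E p).right_inv ht']
  exact hcoord.fderiv_eq.trans (ContinuousLinearMap.fderiv _)

def germDeriv (p : M) : Germs m p →ₗ[ℝ] (E →L[ℝ] ℝ) :=
  ((nhdIdeal m p).restrictScalars ℝ).liftQ (chartDeriv m p)
      (fun _ hf => (chartDeriv_eq_of_eventuallyEq m p (hf.mono fun _ h => h)).trans (map_zero _)) ∘ₗ
    (Submodule.Quotient.restrictScalarsEquiv ℝ (nhdIdeal m p)).symm.toLinearMap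

theorem germDeriv_mk (p : M) (f : SF m M) :
    germDeriv m p (Ideal.Quotient.mk (nhdIdeal m p) f) = chartDeriv m p f :=
  rfl

theorem germDeriv_eq_zero_of_mem_sq (p : M) {a : Germs m p} (ha : a ∈ mIdeal m p ^ 2) :
    germDeriv m p a = 0 := by
  rw [pow_two] at ha
  refine Submodule.mul_induction_on ha (fun a ha b hb => ?_) (fun a b ha hb => ?_)
  · obtain ⟨f, rfl⟩ := Ideal.Quotient.mk_surjective a
    obtain ⟨g, rfl⟩ := Ideal.Quotient.mk_surjective b
    rw [← map_mul, germDeriv_mk, chartDeriv_mul, (mk_mem_mIdeal_iff m p).1 ha,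
      (mk_mem_mIdeal_iff m p).1 hb, zero_smul, zero_smul, add_zero]
  · rw [map_add, ha, hb, add_zero]

def cotangentDeriv (p : M) : IQ m p 1 →ₗ[ℝ] (E →L[ℝ] ℝ) :=
  Submodule.liftQ _ (germDeriv m p ∘ₗ ((mIdeal m p).restrictScalars ℝ).subtype)
    fun _ ha => germDeriv_eq_zero_of_mem_sq m p ha

theorem cotangentDeriv_cotangentClass (p : M) (f : SF m M) (hf : f p = 0) :
    cotangentDeriv m p (cotangentClass m p f hf) = chartDeriv m p f :=
  rfl

theorem exists_eventuallyEq_sum_coord_mul (p : M) (x : Fin m → SF m M)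
    (hchart : ∀ i, ∀ᶠ q in 𝓝 p, x i q = chartAt E p q i) (hx0 : ∀ i, x i p = 0)
    {f : SF m M} (hf : f p = 0) :
    ∃ g : Fin m → SF m M, ∀ᶠ q in 𝓝 p, f q = ∑ i, x i q * g i q := by
  set φ := chartAt E p
  have hφp : φ p = 0 := by
    ext j
    rw [← (hchart j).self_of_nhds, hx0]
    rfl
  obtain ⟨F, hF, hFf⟩ := (contDiffOn_comp_chartAt_symm m p f).exists_contDiff_eventuallyEq
    φ.open_target (mem_chart_target E p)
  obtain ⟨G, hG, hFG⟩ := hF.exists_eq_clm_apply_self (by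
    rw [← hφp, hFf.self_of_nhds, Function.comp_apply, φ.left_inv (mem_chart_source E p), hf])
  let Φ : M → E := fun q => (EuclideanSpace.equiv (Fin m) ℝ).symm fun j => x j q
  have hΦ : ContMDiff (𝓡 m) (𝓡 m) ∞ Φ :=
    (EuclideanSpace.equiv (Fin m) ℝ).symm.contDiff.contMDiff.comp
      (contMDiff_pi_space.2 fun j => (x j).contMDiff)
  refine ⟨fun i => ⟨fun q => G (Φ q) (EuclideanSpace.single i 1),
    (hG.clm_apply contDiff_const).contMDiff.comp hΦ⟩, ?_⟩
  filter_upwards [φ.open_source.mem_nhds (mem_chart_source E p),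
    (φ.continuousAt (mem_chart_source E p)).eventually hFf, eventually_all.2 hchart]
    with q hq hFq hxq
  have hΦq : Φ q = φ q := by
    ext j
    exact hxq j
  calc f q = F (φ q) := by rw [hFq, Function.comp_apply, φ.left_inv hq]
    _ = G (φ q) (φ q) := hFG _
    _ = ∑ i, φ q i * G (φ q) (EuclideanSpace.single i 1) := by
      conv_lhs => arg 2; rw [← (EuclideanSpace.basisFun (Fin m) ℝ).sum_repr (φ q)]
      simp
    _ = ∑ i, x i q * G (Φ q) (EuclideanSpace.single i 1) := by simp only [hΦq, hxq]

theorem exists_mk_sub_sum_smul_coord_mem_mIdeal_sq (p : M) (x : Fin m → SF m M)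
    (hchart : ∀ i, ∀ᶠ q in 𝓝 p, x i q = chartAt E p q i) (hx0 : ∀ i, x i p = 0)
    {f : SF m M} (hf : f p = 0) :
    ∃ c : Fin m → ℝ, Ideal.Quotient.mk (nhdIdeal m p) f -
      ∑ i, c i • Ideal.Quotient.mk (nhdIdeal m p) (x i) ∈ mIdeal m p ^ 2 := by
  obtain ⟨g, hg⟩ := exists_eventuallyEq_sum_coord_mul m p x hchart hx0 hf
  have hfg : Ideal.Quotient.mk (nhdIdeal m p) f =
      ∑ i, Ideal.Quotient.mk (nhdIdeal m p) (x i) * Ideal.Quotient.mk (nhdIdeal m p) (g i) := by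
    simp only [← map_mul, ← map_sum]
    exact (mk_eq_mk_iff_eventuallyEq m p).2
      (hg.mono fun q hq => hq.trans (map_sum (evalHom m q) (fun i => x i * g i) _).symm)
  refine ⟨fun i => g i p, ?_⟩
  rw [hfg, ← Finset.sum_sub_distrib]
  exact sum_mem fun i _ => mk_mul_sub_smul_mem_mIdeal_sq m p (hx0 i) (g i)

theorem linearIndependent_cotangentClass_coord (p : M) (x : Fin m → SF m M)
    (hchart : ∀ i, ∀ᶠ q in 𝓝 p, x i q = chartAt E p q i) (hx0 : ∀ i, x i p = 0) :
    LinearIndependent ℝ fun i => cotangentClass m p (x i) (hx0 i) := by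
  refine LinearIndependent.of_comp (cotangentDeriv m p) ?_
  have hcoord : cotangentDeriv m p ∘ (fun i => cotangentClass m p (x i) (hx0 i)) =
      fun i => EuclideanSpace.proj i :=
    funext fun i => (cotangentDeriv_cotangentClass m p (x i) (hx0 i)).trans
      (chartDeriv_of_eventuallyEq_coord m p (hchart i))
  rw [hcoord]
  exact EuclideanSpace.linearIndependent_proj (Fin m)

theorem span_cotangentClass_coord_eq_top (p : M) (x : Fin m → SF m M)
    (hchart : ∀ i, ∀ᶠ q in 𝓝 p, x i q = chartAt E p q i) (hx0 : ∀ i, x i p = 0) :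
    Submodule.span ℝ (Set.range fun i => cotangentClass m p (x i) (hx0 i)) = ⊤ := by
  refine eq_top_iff.2 fun w _ => ?_
  obtain ⟨⟨a, ha⟩, rfl⟩ := Submodule.Quotient.mk_surjective _ w
  obtain ⟨f, rfl⟩ := Ideal.Quotient.mk_surjective a
  obtain ⟨c, hc⟩ := exists_mk_sub_sum_smul_coord_mem_mIdeal_sq m p x hchart hx0 ha
  rw [show Submodule.Quotient.mk _ = cotangentClass m p f ha from rfl,
    cotangentClass_eq_sum_smul m p ha hx0 c hc]
  exact sum_mem fun i _ => Submodule.smul_mem _ _ (Submodule.subset_span ⟨i, rfl⟩)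

theorem coordinate_classes_basis (p : M) (x : Fin m → SF m M)
    (hchart : ∀ i, ∀ᶠ q in nhds p,
      x i q = chartAt (EuclideanSpace ℝ (Fin m)) p q i)
    (hx0 : ∀ i, x i p = 0) :
    LinearIndependent ℝ (fun i : Fin m =>
        (Submodule.Quotient.mk
          ⟨Ideal.Quotient.mk (nhdIdeal m p) (x i), mk_mem_mIdeal m p (x i) (hx0 i)⟩ :
          IQ m p 1)) ∧
      Submodule.span ℝ (Set.range (fun i : Fin m =>
        (Submodule.Quotient.mk
          ⟨Ideal.Quotient.mk (nhdIdeal m p) (x i), mk_mem_mIdeal m p (x i) (hx0 i)⟩ :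
          IQ m p 1))) = ⊤ ∧
      Module.finrank ℝ (IQ m p 1) = m := by
  have hind := linearIndependent_cotangentClass_coord m p x hchart hx0
  have hspan := span_cotangentClass_coord_eq_top m p x hchart hx0
  refine ⟨hind, hspan, ?_⟩
  rw [Module.finrank_eq_card_basis (Module.Basis.mk hind hspan.ge), Fintype.card_fin]
end
end

section
/- Let F_p be the germs of smooth functions at a point p of a smooth manifold and I_p the ideal of germs vanishing at p. Every derivation of order ≤ r at p (a differential operator of order ≤ r at p, in the recursive sense, vanishing on constants) vanishes on I_p^{r+1}, and the space of such derivations is in linear bijection with (I_p / I_p^{r+1})*. -/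
open scoped Manifold

set_option synthInstance.maxHeartbeats 400000
set_option maxHeartbeats 1000000

noncomputable section

variable (m : ℕ) {M : Type*} [TopologicalSpace M]
  [ChartedSpace (EuclideanSpace ℝ (Fin m)) M]
  [IsManifold (𝓡 m) (⊤ : ℕ∞) M]

/-- Differential operators of order ≤ r at `p`, recursively: order 0 is multiplication by
a germ followed by evaluation at `p`; `D` has order ≤ r+1 iff for every germ `g` the map
`f ↦ D(gf) − g(p)D(f)` has order ≤ r. -/
def IsDiffOpAt (p : M) : ℕ → (Germs m p →ₗ[ℝ] ℝ) → Prop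
  | 0, D => ∃ g : Germs m p, ∀ f : Germs m p, D f = germEval m p (g * f)
  | (r + 1), D => ∀ g : Germs m p,
      IsDiffOpAt p r (D ∘ₗ LinearMap.mulLeft ℝ g - germEval m p g • D)

/-- Derivations of order ≤ r at `p`: differential operators of order ≤ r at `p`
vanishing on constants. -/
def IsDerivAt (p : M) (r : ℕ) (D : Germs m p →ₗ[ℝ] ℝ) : Prop :=
  IsDiffOpAt m p r D ∧ ∀ c : ℝ, D (algebraMap ℝ (Germs m p) c) = 0

/-! A differential operator `D` of order `≤ r + 1` is one whose commutators
`f ↦ D (g f) - g(p) D f = D ((g - g(p)) f)` have order `≤ r`; as `g - g(p)` ranges over `I_p`,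
induction on `r` shows that `D` has order `≤ r` exactly when it kills `I_p^{r+1}`. All of this
is algebra over the augmentation `F_p → ℝ`, and the splitting `f = f(p) + (f - f(p))` of
`F_p = ℝ ⊕ I_p` identifies functionals killing constants and `I_p^{r+1}` with
`(I_p / I_p^{r+1})*`. -/

section Augmented

variable {k A : Type*} [CommRing k] [CommRing A] [Algebra k A] (ε : A →ₐ[k] k)

def augmentationProj : A →ₗ[k] (RingHom.ker ε).restrictScalars k :=
  (LinearMap.id - Algebra.linearMap k A ∘ₗ ε.toLinearMap).codRestrict _ fun f => by
    simp

theorem augmentationProj_apply_coe (f : A) :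
    (augmentationProj ε f : A) = f - algebraMap k A (ε f) := rfl

theorem augmentationProj_of_mem {f : A} (hf : f ∈ RingHom.ker ε) :
    augmentationProj ε f = ⟨f, hf⟩ := by
  ext
  rw [augmentationProj_apply_coe, RingHom.mem_ker.1 hf, map_zero, sub_zero]

theorem augmentationProj_algebraMap (c : k) : augmentationProj ε (algebraMap k A c) = 0 := by
  ext
  rw [augmentationProj_apply_coe, AlgHom.commutes, Algebra.algebraMap_self_apply, sub_self,
    ZeroMemClass.coe_zero]

theorem exists_forall_eq_apply_mul_iff (D : A →ₗ[k] k) :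
    (∃ g : A, ∀ f, D f = ε (g * f)) ↔ ∀ f ∈ RingHom.ker ε, D f = 0 := by
  constructor
  · rintro ⟨g, hg⟩ f hf
    rw [hg, map_mul, RingHom.mem_ker.1 hf, mul_zero]
  · intro hD
    refine ⟨algebraMap k A (D 1), fun f => ?_⟩
    have h := hD _ (augmentationProj ε f).2
    rw [augmentationProj_apply_coe, map_sub, sub_eq_zero, Algebra.algebraMap_eq_smul_one,
      map_smul] at h
    rw [h, map_mul, AlgHom.commutes, smul_eq_mul, Algebra.algebraMap_self_apply, mul_comm]

theorem forall_comp_mulLeft_sub_smul_eq_zero_iff (D : A →ₗ[k] k) (n : ℕ) :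
    (∀ g, ∀ f ∈ RingHom.ker ε ^ n, (D ∘ₗ LinearMap.mulLeft k g - ε g • D) f = 0) ↔
      ∀ f ∈ RingHom.ker ε ^ (n + 1), D f = 0 := by
  simp only [LinearMap.sub_apply, LinearMap.comp_apply, LinearMap.mulLeft_apply,
    LinearMap.smul_apply, sub_eq_zero]
  constructor
  · intro hD f hf
    rw [pow_succ'] at hf
    refine Submodule.mul_induction_on hf (fun g hg f hf => ?_) (fun x y hx hy => ?_)
    · rw [hD g f hf, RingHom.mem_ker.1 hg, zero_smul]
    · rw [map_add, hx, hy, add_zero]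
  · intro hD g f hf
    have hmem : (augmentationProj ε g : A) * f ∈ RingHom.ker ε ^ (n + 1) := by
      rw [pow_succ']
      exact Submodule.mul_mem_mul (augmentationProj ε g).2 hf
    have h := hD _ hmem
    rwa [augmentationProj_apply_coe, sub_mul, map_sub, sub_eq_zero, ← Algebra.smul_def,
      map_smul] at h

variable {ε} (J : Submodule k A) (hJ : J ≤ (RingHom.ker ε).restrictScalars k)

def functionalEquivDualQuotient :
    {D : A →ₗ[k] k // (∀ f ∈ J, D f = 0) ∧ ∀ c, D (algebraMap k A c) = 0} ≃
      ((RingHom.ker ε).restrictScalars k ⧸ J.comap ((RingHom.ker ε).restrictScalars k).subtype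
        →ₗ[k] k) where
  toFun D := (J.comap ((RingHom.ker ε).restrictScalars k).subtype).liftQ
    (D.1 ∘ₗ ((RingHom.ker ε).restrictScalars k).subtype) fun f hf => D.2.1 f hf
  invFun φ := ⟨φ ∘ₗ (J.comap ((RingHom.ker ε).restrictScalars k).subtype).mkQ ∘ₗ
      augmentationProj ε,
    fun f hf => by
      have : (J.comap ((RingHom.ker ε).restrictScalars k).subtype).mkQ ⟨f, hJ hf⟩ = 0 :=
        (Submodule.Quotient.mk_eq_zero _).2 hf
      rw [LinearMap.comp_apply, LinearMap.comp_apply, augmentationProj_of_mem ε (hJ hf), this,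
        map_zero],
    fun c => by simp only [LinearMap.comp_apply, augmentationProj_algebraMap, map_zero]⟩
  left_inv D := by
    ext f
    have hD1 : D.1 1 = 0 := by simpa using D.2.2 1
    change D.1 (augmentationProj ε f) = D.1 f
    rw [augmentationProj_apply_coe, map_sub, Algebra.algebraMap_eq_smul_one, map_smul, hD1,
      smul_zero, sub_zero]
  right_inv φ := by
    refine Submodule.linearMap_qext _ (LinearMap.ext fun ⟨f, hf⟩ => ?_)
    change φ (Submodule.Quotient.mk (augmentationProj ε f)) =
      φ (Submodule.Quotient.mk ⟨f, hf⟩)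
    rw [augmentationProj_of_mem ε hf]

theorem functionalEquivDualQuotient_apply_mk
    (D : {D : A →ₗ[k] k // (∀ f ∈ J, D f = 0) ∧ ∀ c, D (algebraMap k A c) = 0})
    {f : A} (hf : f ∈ RingHom.ker ε) :
    functionalEquivDualQuotient J hJ D (Submodule.Quotient.mk ⟨f, hf⟩) = D.1 f :=
  Submodule.liftQ_apply _ _ _

end Augmented

def germEvalAlgHom (p : M) : Germs m p →ₐ[ℝ] ℝ :=
  { germEval m p with commutes' := fun _ => rfl }

omit [IsManifold (𝓡 m) (⊤ : ℕ∞) M] in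
theorem isDiffOpAt_iff (p : M) (r : ℕ) (D : Germs m p →ₗ[ℝ] ℝ) :
    IsDiffOpAt m p r D ↔ ∀ f ∈ mIdeal m p ^ (r + 1), D f = 0 := by
  induction r generalizing D with
  | zero =>
    rw [zero_add, pow_one (M := Ideal (Germs m p))]
    exact exists_forall_eq_apply_mul_iff (germEvalAlgHom m p) D
  | succ r ih =>
    exact (forall_congr' fun g => ih _).trans
      (forall_comp_mulLeft_sub_smul_eq_zero_iff (germEvalAlgHom m p) D (r + 1))

set_option linter.unusedSectionVars false in
/-- every derivation of order ≤ r at `p` vanishes on `I_p^{r+1}`, and the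
space of such derivations is in linear bijection with `(I_p / I_p^{r+1})^*`. -/
theorem derivations_at_point_iso (p : M) (r : ℕ) :
    (∀ D : Germs m p →ₗ[ℝ] ℝ, IsDerivAt m p r D →
        ∀ f ∈ mIdeal m p ^ (r + 1), D f = 0) ∧
      ∃ Φ : {D : Germs m p →ₗ[ℝ] ℝ // IsDerivAt m p r D} ≃ (IQ m p r →ₗ[ℝ] ℝ),
        ∀ (D : Germs m p →ₗ[ℝ] ℝ) (hD : IsDerivAt m p r D) (f : Germs m p)
          (hf : f ∈ (mIdeal m p).restrictScalars ℝ),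
          Φ ⟨D, hD⟩ (Submodule.Quotient.mk ⟨f, hf⟩) = D f := by
  have hle : (mIdeal m p ^ (r + 1)).restrictScalars ℝ ≤
      (RingHom.ker (germEvalAlgHom m p)).restrictScalars ℝ :=
    Submodule.restrictScalars_mono ℝ (Ideal.pow_le_self r.succ_ne_zero)
  refine ⟨fun D hD => (isDiffOpAt_iff m p r D).1 hD.1,
    (Equiv.subtypeEquivRight fun D => and_congr_left' (isDiffOpAt_iff m p r D)).trans
      (functionalEquivDualQuotient _ hle),
    fun D hD f hf => functionalEquivDualQuotient_apply_mk _ hle ⟨D, _⟩ hf⟩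
end
end
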